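/- arXiv:0804.4195 — 2 statements merged into one kernel-verified Lean document; each statement's English description precedes it below -/
import Mathlib

section
/- Let t ≥ 2 be an integer, P > 0, h, g ∈ ℂ^t, and let e₂ be a unit-norm generalized eigenvector of the pencil (I + P g g*, I + P h h*) with eigenvalue λ₂, and assume λ₂ ≥ 1. Define ξ₂(β) = (1 + βP|g* e₂|²)/(1 + βP|h* e₂|²) for β ∈ [0,1]. Then ξ₂(β) ≤ λ₂ for every β ∈ [0,1], and ξ₂(1) = λ₂. Consequently the maximum over β ∈ [0,1] of log₂ ξ₂(β) equals log₂ λ₂ and is attained at β = 1 (Corollary 3: the maximum secrecy rate of user 2 is R₂,max = log₂ λ₂). -/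
open scoped InnerProductSpace

/-- `ξ₂(β) = (1 + βP|g* e₂|²)/(1 + βP|h* e₂|²)`. -/
noncomputable def xi2 (t : ℕ) (P : ℝ) (h g e2 : EuclideanSpace ℂ (Fin t)) (β : ℝ) : ℝ :=
  (1 + β * P * ‖⟪g, e2⟫_ℂ‖ ^ 2) / (1 + β * P * ‖⟪h, e2⟫_ℂ‖ ^ 2)

/-!
Pairing the eigen-equation `(I + P g g*) e₂ = λ₂ (I + P h h*) e₂` with the unit vector `e₂` gives
`1 + P|g* e₂|² = λ₂ (1 + P|h* e₂|²)`, which is `ξ₂(1) = λ₂`. Writing `a = P|g* e₂|²`,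
`b = P|h* e₂|²`, the numerator `1 + βa = (1 - β) + βλ₂(1 + b)` is then at most
`λ₂(1 - β) + βλ₂(1 + b) = λ₂(1 + βb)` as soon as `λ₂ ≥ 1`, so `ξ₂(β) ≤ λ₂`; the statement
about `log₂` follows by monotonicity.
-/

open Set

theorem one_add_mul_norm_inner_sq_eq_of_eigenvector {𝕜 E : Type*} [RCLike 𝕜]
    [NormedAddCommGroup E] [InnerProductSpace 𝕜 E] {c lam : ℝ} {h g e : E} (he : ‖e‖ = 1)
    (heig : e + ((c : 𝕜) * ⟪g, e⟫_𝕜) • g = (lam : 𝕜) • (e + ((c : 𝕜) * ⟪h, e⟫_𝕜) • h)) :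
    1 + c * ‖⟪g, e⟫_𝕜‖ ^ 2 = lam * (1 + c * ‖⟪h, e⟫_𝕜‖ ^ 2) := by
  have hpair := congrArg (fun v => ⟪e, v⟫_𝕜) heig
  simp only [inner_add_right, inner_smul_right, inner_self_eq_norm_sq_to_K, he,
    RCLike.ofReal_one, one_pow] at hpair
  rw [mul_assoc, mul_assoc, ← inner_conj_symm e g, ← inner_conj_symm e h, RCLike.mul_conj,
    RCLike.mul_conj] at hpair
  exact_mod_cast hpair

section Ratio

variable {a b lam β : ℝ}

theorem one_add_mul_div_one_add_mul_le (hb : 0 ≤ b) (hlam : 1 ≤ lam)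
    (hab : 1 + a = lam * (1 + b)) (hβ : β ∈ Icc 0 1) :
    (1 + β * a) / (1 + β * b) ≤ lam := by
  have hden : 0 < 1 + β * b := by nlinarith [hβ.1]
  rw [div_le_iff₀ hden]
  have hβa : β * (1 + a) = β * (lam * (1 + b)) := by rw [hab]
  linarith [mul_nonneg (sub_nonneg.2 hβ.2) (sub_nonneg.2 hlam)]

theorem one_add_mul_div_one_add_mul_pos (hb : 0 ≤ b) (hlam : 1 ≤ lam)
    (hab : 1 + a = lam * (1 + b)) (hβ : 0 ≤ β) :
    0 < (1 + β * a) / (1 + β * b) := by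
  have ha : 0 ≤ a := by nlinarith
  positivity

end Ratio

theorem stmt_4_general (t : ℕ) (P : ℝ) (hP : 0 < P)
    (h g e2 : EuclideanSpace ℂ (Fin t)) (lam2 : ℝ)
    (he2 : ‖e2‖ = 1)
    (heig : e2 + ((P : ℂ) * ⟪g, e2⟫_ℂ) • g = (lam2 : ℂ) • (e2 + ((P : ℂ) * ⟪h, e2⟫_ℂ) • h))
    (hlam : 1 ≤ lam2) :
    (∀ β ∈ Set.Icc (0 : ℝ) 1, xi2 t P h g e2 β ≤ lam2) ∧
    xi2 t P h g e2 1 = lam2 ∧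
    (∀ β ∈ Set.Icc (0 : ℝ) 1,
      Real.logb 2 (xi2 t P h g e2 β) ≤ Real.logb 2 lam2) ∧
    Real.logb 2 (xi2 t P h g e2 1) = Real.logb 2 lam2 := by
  have hb : 0 ≤ P * ‖⟪h, e2⟫_ℂ‖ ^ 2 := by positivity
  have hab := one_add_mul_norm_inner_sq_eq_of_eigenvector he2 heig
  have hxi (β : ℝ) : xi2 t P h g e2 β =
      (1 + β * (P * ‖⟪g, e2⟫_ℂ‖ ^ 2)) / (1 + β * (P * ‖⟪h, e2⟫_ℂ‖ ^ 2)) := by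
    simp only [xi2, mul_assoc]
  have hle (β : ℝ) (hβ : β ∈ Icc 0 1) : xi2 t P h g e2 β ≤ lam2 :=
    hxi β ▸ one_add_mul_div_one_add_mul_le hb hlam hab hβ
  have hone : xi2 t P h g e2 1 = lam2 := by
    rw [hxi, one_mul, one_mul, hab, mul_div_cancel_right₀ _ (by positivity)]
  refine ⟨hle, hone, fun β hβ => ?_, by rw [hone]⟩
  exact Real.logb_le_logb_of_le one_lt_two
    (hxi β ▸ one_add_mul_div_one_add_mul_pos hb hlam hab hβ.1) (hle β hβ)

/-- Corollary 3: if `e₂` is a unit-norm generalized eigenvector of the pencil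
`(I + P g g*, I + P h h*)` with eigenvalue `λ₂ ≥ 1`, then `ξ₂(β) ≤ λ₂` for every
`β ∈ [0,1]` and `ξ₂(1) = λ₂`; consequently the maximum over `β ∈ [0,1]` of
`log₂ ξ₂(β)` equals `log₂ λ₂` and is attained at `β = 1`
(`R₂,max = log₂ λ₂`). -/
theorem stmt_4 (t : ℕ) (ht : 2 ≤ t) (P : ℝ) (hP : 0 < P)
    (h g e2 : EuclideanSpace ℂ (Fin t)) (lam2 : ℝ)
    (he2 : ‖e2‖ = 1)
    (heig : e2 + ((P : ℂ) * ⟪g, e2⟫_ℂ) • g = (lam2 : ℂ) • (e2 + ((P : ℂ) * ⟪h, e2⟫_ℂ) • h))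
    (hlam : 1 ≤ lam2) :
    (∀ β ∈ Set.Icc (0 : ℝ) 1, xi2 t P h g e2 β ≤ lam2) ∧
    xi2 t P h g e2 1 = lam2 ∧
    (∀ β ∈ Set.Icc (0 : ℝ) 1,
      Real.logb 2 (xi2 t P h g e2 β) ≤ Real.logb 2 lam2) ∧
    Real.logb 2 (xi2 t P h g e2 1) = Real.logb 2 lam2 :=
  stmt_4_general t P hP h g e2 lam2 he2 heig hlam
end

section
/- Let t ≥ 2 be an integer, P > 0, and suppose h, g ∈ ℂ^t are linearly independent. Let e₁ be a unit-norm generalized eigenvector of the pencil (I + P h h*, I + P g g*) with eigenvalue λ₁ equal to the largest generalized eigenvalue, define γ₁(α) = (1 + αP|h* e₁|²)/(1 + αP|g* e₁|²), and let γ₂(α) be the largest generalized eigenvalue of the pencil (I + ((1−α)P/(1 + αP|g* e₁|²)) g g*, I + ((1−α)P/(1 + αP|h* e₁|²)) h h*). Then for every α ∈ (0,1), both γ₁(α) > 1 and γ₂(α) > 1; hence both log₂ γ₁(α) > 0 and log₂ γ₂(α) > 0, i.e. both users can simultaneously achieve strictly positive secrecy rates. -/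
/-!
A generalized Rayleigh quotient of `(I + s v v*, I + r w w*)` with `s > 0`, evaluated at a vector
orthogonal to `w` but not to `v`, equals `1 + s|v*x|²/‖x‖² > 1`; such a vector exists as soon as
`v ∉ span {w}`, so the largest generalized eigenvalue of such a pencil exceeds `1`. This gives
`γ₂(α) > 1` directly and `λ₁ > 1`. Pairing the eigen-equation of `e₁` with `e₁` yields
`1 + P|h*e₁|² = λ₁ (1 + P|g*e₁|²)`, hence `|h*e₁| > |g*e₁|` and `γ₁(α) > 1` for `α > 0`.
-/

open scoped InnerProductSpace

/-- The set of generalized Rayleigh quotients of the pencil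
`(I + s·v v*, I + r·w w*)` over nonzero `x ∈ ℂ^t`. -/
noncomputable def rayleighSet (t : ℕ) (s r : ℝ) (v w : EuclideanSpace ℂ (Fin t)) : Set ℝ :=
  {ρ : ℝ | ∃ x : EuclideanSpace ℂ (Fin t), x ≠ 0 ∧
    ρ = (‖x‖ ^ 2 + s * ‖⟪v, x⟫_ℂ‖ ^ 2) / (‖x‖ ^ 2 + r * ‖⟪w, x⟫_ℂ‖ ^ 2)}

/-- `γ₁(α) = (1 + αP|h* e₁|²)/(1 + αP|g* e₁|²)`. -/
noncomputable def gamma1 (t : ℕ) (P : ℝ) (h g e1 : EuclideanSpace ℂ (Fin t)) (α : ℝ) : ℝ :=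
  (1 + α * P * ‖⟪h, e1⟫_ℂ‖ ^ 2) / (1 + α * P * ‖⟪g, e1⟫_ℂ‖ ^ 2)

theorem LinearIndependent.notMem_span_singleton_of_pair {R M : Type*} [Ring R] [Nontrivial R]
    [AddCommGroup M] [Module R M] {x y : M} (hxy : LinearIndependent R ![x, y]) :
    x ∉ R ∙ y := by
  simpa [Set.image, Fin.exists_fin_two] using hxy.notMem_span 0

theorem exists_inner_eq_zero_inner_ne_zero {𝕜 E : Type*} [RCLike 𝕜] [NormedAddCommGroup E]
    [InnerProductSpace 𝕜 E] {v w : E} (hv : v ∉ 𝕜 ∙ w) :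
    ∃ x : E, ⟪w, x⟫_𝕜 = 0 ∧ ⟪v, x⟫_𝕜 ≠ 0 := by
  by_contra! hperp
  refine hv ((𝕜 ∙ w).orthogonal_orthogonal ▸ ?_)
  rw [Submodule.mem_orthogonal]
  intro x hx
  rw [← inner_conj_symm, hperp x (Submodule.mem_orthogonal_singleton_iff_inner_right.mp hx),
    map_zero]

theorem inner_mul_inner_swap_eq_norm_sq {𝕜 E : Type*} [RCLike 𝕜] [NormedAddCommGroup E]
    [InnerProductSpace 𝕜 E] (x y : E) : ⟪x, y⟫_𝕜 * ⟪y, x⟫_𝕜 = ((‖⟪x, y⟫_𝕜‖ ^ 2 : ℝ) : 𝕜) := by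
  rw [← inner_conj_symm y x, RCLike.mul_conj]
  push_cast
  rfl

theorem rayleigh_eq_of_pencil_eigenvector {𝕜 E : Type*} [RCLike 𝕜] [NormedAddCommGroup E]
    [InnerProductSpace 𝕜 E] {s r lam : ℝ} {v w e : E}
    (heig : e + ((s : 𝕜) * ⟪v, e⟫_𝕜) • v = (lam : 𝕜) • (e + ((r : 𝕜) * ⟪w, e⟫_𝕜) • w)) :
    ‖e‖ ^ 2 + s * ‖⟪v, e⟫_𝕜‖ ^ 2 = lam * (‖e‖ ^ 2 + r * ‖⟪w, e⟫_𝕜‖ ^ 2) := by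
  have h := congrArg (fun y => ⟪e, y⟫_𝕜) heig
  simp only [inner_add_right, inner_smul_right, inner_self_eq_norm_sq_to_K, mul_assoc,
    inner_mul_inner_swap_eq_norm_sq] at h
  exact_mod_cast h

section Rayleigh

variable {t : ℕ} {s r : ℝ} {v w : EuclideanSpace ℂ (Fin t)}

theorem exists_one_lt_mem_rayleighSet (hs : 0 < s) (hv : v ∉ ℂ ∙ w) :
    ∃ ρ ∈ rayleighSet t s r v w, 1 < ρ := by
  obtain ⟨x, hwx, hvx⟩ := exists_inner_eq_zero_inner_ne_zero hv
  have hx : x ≠ 0 := by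
    rintro rfl
    simp at hvx
  refine ⟨_, ⟨x, hx, rfl⟩, ?_⟩
  have hx2 : 0 < ‖x‖ ^ 2 := by positivity
  rw [hwx, norm_zero, zero_pow two_ne_zero, mul_zero, add_zero, one_lt_div hx2]
  exact lt_add_of_pos_right _ (mul_pos hs (pow_pos (norm_pos_iff.mpr hvx) 2))

theorem one_lt_of_mem_upperBounds_rayleighSet {lam : ℝ} (hs : 0 < s) (hv : v ∉ ℂ ∙ w)
    (hlam : lam ∈ upperBounds (rayleighSet t s r v w)) : 1 < lam :=
  let ⟨_, hρ, hlt⟩ := exists_one_lt_mem_rayleighSet (r := r) hs hv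
  hlt.trans_le (hlam hρ)

end Rayleigh

theorem one_lt_gamma1 {t : ℕ} {P α : ℝ} {h g e1 : EuclideanSpace ℂ (Fin t)} (hP : 0 < P)
    (hα : 0 < α) (hgh : ‖⟪g, e1⟫_ℂ‖ ^ 2 < ‖⟪h, e1⟫_ℂ‖ ^ 2) : 1 < gamma1 t P h g e1 α := by
  rw [gamma1, one_lt_div (by positivity)]
  nlinarith [mul_pos hα hP]

theorem stmt_11_general (t : ℕ) (P : ℝ) (hP : 0 < P)
    (h g : EuclideanSpace ℂ (Fin t)) (hli : LinearIndependent ℂ ![h, g])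
    (e1 : EuclideanSpace ℂ (Fin t)) (lam1 : ℝ)
    (he1 : ‖e1‖ = 1)
    (heig : e1 + ((P : ℂ) * ⟪h, e1⟫_ℂ) • h = (lam1 : ℂ) • (e1 + ((P : ℂ) * ⟪g, e1⟫_ℂ) • g))
    (hlub : IsLUB (rayleighSet t P P h g) lam1)
    (γ2 : ℝ → ℝ)
    (hγ2 : ∀ α ∈ Set.Ioo (0 : ℝ) 1,
      IsLUB (rayleighSet t ((1 - α) * P / (1 + α * P * ‖⟪g, e1⟫_ℂ‖ ^ 2))
        ((1 - α) * P / (1 + α * P * ‖⟪h, e1⟫_ℂ‖ ^ 2)) g h) (γ2 α)) :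
    ∀ α ∈ Set.Ioo (0 : ℝ) 1,
      1 < gamma1 t P h g e1 α ∧ 1 < γ2 α ∧
      0 < Real.logb 2 (gamma1 t P h g e1 α) ∧ 0 < Real.logb 2 (γ2 α) := by
  intro α ⟨hα0, hα1⟩
  have hlam : 1 < lam1 :=
    one_lt_of_mem_upperBounds_rayleighSet hP hli.notMem_span_singleton_of_pair hlub.1
  have hrayleigh := rayleigh_eq_of_pencil_eigenvector heig
  rw [he1, one_pow] at hrayleigh
  have hgh : ‖⟪g, e1⟫_ℂ‖ ^ 2 < ‖⟪h, e1⟫_ℂ‖ ^ 2 := by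
    nlinarith [mul_pos hP (sub_pos.mpr hlam), sq_nonneg ‖⟪g, e1⟫_ℂ‖]
  have hγ1 : 1 < gamma1 t P h g e1 α := one_lt_gamma1 hP hα0 hgh
  have hs : 0 < (1 - α) * P / (1 + α * P * ‖⟪g, e1⟫_ℂ‖ ^ 2) :=
    div_pos (mul_pos (sub_pos.mpr hα1) hP) (by positivity)
  have hγ2' : 1 < γ2 α := one_lt_of_mem_upperBounds_rayleighSet hs
    (LinearIndependent.pair_symm_iff.mp hli).notMem_span_singleton_of_pair (hγ2 α ⟨hα0, hα1⟩).1
  exact ⟨hγ1, hγ2', Real.logb_pos one_lt_two hγ1, Real.logb_pos one_lt_two hγ2'⟩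

/-- If `h, g ∈ ℂ^t` are linearly independent, `e₁` is a unit-norm generalized
eigenvector of the pencil `(I + P h h*, I + P g g*)` whose eigenvalue `λ₁` is the
largest generalized eigenvalue, and `γ₂(α)` is the largest generalized eigenvalue
of the pencil `(I + ((1−α)P/(1+αP|g*e₁|²)) g g*, I + ((1−α)P/(1+αP|h*e₁|²)) h h*)`,
then for every `α ∈ (0,1)` both `γ₁(α) > 1` and `γ₂(α) > 1`; hence
`log₂ γ₁(α) > 0` and `log₂ γ₂(α) > 0`: both users can simultaneously achieve
strictly positive secrecy rates. -/
theorem stmt_11 (t : ℕ) (ht : 2 ≤ t) (P : ℝ) (hP : 0 < P)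
    (h g : EuclideanSpace ℂ (Fin t)) (hli : LinearIndependent ℂ ![h, g])
    (e1 : EuclideanSpace ℂ (Fin t)) (lam1 : ℝ)
    (he1 : ‖e1‖ = 1)
    (heig : e1 + ((P : ℂ) * ⟪h, e1⟫_ℂ) • h = (lam1 : ℂ) • (e1 + ((P : ℂ) * ⟪g, e1⟫_ℂ) • g))
    (hlub : IsLUB (rayleighSet t P P h g) lam1)
    (γ2 : ℝ → ℝ)
    (hγ2 : ∀ α ∈ Set.Ioo (0 : ℝ) 1,
      IsLUB (rayleighSet t ((1 - α) * P / (1 + α * P * ‖⟪g, e1⟫_ℂ‖ ^ 2))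
        ((1 - α) * P / (1 + α * P * ‖⟪h, e1⟫_ℂ‖ ^ 2)) g h) (γ2 α)) :
    ∀ α ∈ Set.Ioo (0 : ℝ) 1,
      1 < gamma1 t P h g e1 α ∧ 1 < γ2 α ∧
      0 < Real.logb 2 (gamma1 t P h g e1 α) ∧ 0 < Real.logb 2 (γ2 α) :=
  stmt_11_general t P hP h g hli e1 lam1 he1 heig hlub γ2 hγ2
end
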